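/- (Equilibration of the critically damped reference process.) Let A := [[0, 1], [−1, −2]] and, for a, b ∈ ℝ, let S(T) := e^{−2T}·[[ (T+1)²·a + T²·b + e^{2T} − 1 − 2T − 2T², −T(T+1)·a + T(1−T)·b + 2T² ], [ −T(T+1)·a + T(1−T)·b + 2T², T²·a + (1−T)²·b − 2T² + 2T + e^{2T} − 1 ]]. Then as T → ∞: (i) exp(T·A) tends to the zero matrix, and (ii) S(T) tends to the 2×2 identity matrix. -/

import Mathlib

/-!
Write `A = -1 + N` with `N = !![1, 1; -1, -1]`; since `N ^ 2 = 0` and `1` is central,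
`exp (T • A) = exp (-T) • (1 + T • N)`. Likewise the `exp (2 * T)` terms of `S(T)` cancel the
prefactor, so `S(T) - 1` is `exp (-2 * T)` times a quadratic polynomial in `T` with matrix
coefficients. Both therefore decay, because `T ^ k * exp (-c * T) → 0` for every `c > 0`.
-/

open Matrix Filter

/-- Covariance of the critically damped reference process started from `diag (a, b)`. -/
noncomputable def Scov (a b : ℝ) (T : ℝ) : Matrix (Fin 2) (Fin 2) ℝ :=
  Real.exp (-2 * T) •
    !![(T + 1) ^ 2 * a + T ^ 2 * b + Real.exp (2 * T) - 1 - 2 * T - 2 * T ^ 2,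
        -(T * (T + 1)) * a + T * (1 - T) * b + 2 * T ^ 2;
      -(T * (T + 1)) * a + T * (1 - T) * b + 2 * T ^ 2,
        T ^ 2 * a + (1 - T) ^ 2 * b - 2 * T ^ 2 + 2 * T + Real.exp (2 * T) - 1]

open Topology

theorem NormedSpace.exp_eq_one_add_of_sq_eq_zero {𝔸 : Type*} [Ring 𝔸] [Algebra ℚ 𝔸]
    [TopologicalSpace 𝔸] [IsTopologicalRing 𝔸] {x : 𝔸} (hx : x ^ 2 = 0) :
    NormedSpace.exp x = 1 + x := by
  have hvanish : ∀ n ∉ ({0, 1} : Finset ℕ), (n.factorial⁻¹ : ℚ) • x ^ n = 0 := by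
    intro n hn
    obtain ⟨k, rfl⟩ : ∃ k, n = k + 2 := ⟨n - 2, by grind⟩
    rw [pow_add, hx, mul_zero, smul_zero]
  rw [congrFun NormedSpace.exp_eq_tsum_rat x, tsum_eq_sum hvanish, Finset.sum_pair zero_ne_one]
  simp

theorem Matrix.exp_algebraMap {n : Type*} [Fintype n] [DecidableEq n] (r : ℝ) :
    NormedSpace.exp (algebraMap ℝ (Matrix n n ℝ) r) = algebraMap ℝ _ (Real.exp r) := by
  let := Matrix.linftyOpNormedRing (n := n) (α := ℝ)
  let := Matrix.linftyOpNormedAlgebra (R := ℝ) (n := n) (α := ℝ)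
  rw [Real.exp_eq_exp_ℝ, NormedSpace.algebraMap_exp_comm]
  rfl

theorem tendsto_pow_mul_exp_neg_mul_atTop_nhds_zero (k : ℕ) {c : ℝ} (hc : 0 < c) :
    Tendsto (fun T : ℝ => T ^ k * Real.exp (-c * T)) atTop (𝓝 0) := by
  simpa only [Real.rpow_natCast] using tendsto_rpow_mul_exp_neg_mul_atTop_nhds_zero k c hc

theorem tendsto_exp_neg_mul_smul_sum_pow_smul_atTop_nhds_zero {E : Type*} [AddCommMonoid E]
    [Module ℝ E] [TopologicalSpace E] [ContinuousAdd E] [ContinuousSMul ℝ E] {n : ℕ}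
    (v : Fin n → E) {c : ℝ} (hc : 0 < c) :
    Tendsto (fun T : ℝ => Real.exp (-c * T) • ∑ k : Fin n, T ^ (k : ℕ) • v k)
      atTop (𝓝 0) := by
  simp_rw [Finset.smul_sum, smul_smul]
  rw [← Finset.sum_const_zero (s := Finset.univ (α := Fin n))]
  refine tendsto_finsetSum _ fun k _ => ?_
  simpa only [mul_comm, zero_smul] using
    (tendsto_pow_mul_exp_neg_mul_atTop_nhds_zero k hc).smul_const (v k)

theorem exp_smul_critical_drift (T : ℝ) :
    NormedSpace.exp (T • (!![0, 1; -1, -2] : Matrix (Fin 2) (Fin 2) ℝ)) =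
      Real.exp (-T) • (1 + T • !![1, 1; -1, -1]) := by
  have hsplit : T • (!![0, 1; -1, -2] : Matrix (Fin 2) (Fin 2) ℝ) =
      algebraMap ℝ _ (-T) + T • !![1, 1; -1, -1] := by
    ext i j
    fin_cases i <;> fin_cases j <;> simp [Matrix.algebraMap_matrix_apply, mul_two]
  have hnil : (T • (!![1, 1; -1, -1] : Matrix (Fin 2) (Fin 2) ℝ)) ^ 2 = 0 := by
    ext i j
    fin_cases i <;> fin_cases j <;> simp [sq]
  rw [hsplit, Matrix.exp_add_of_commute _ _ (Algebra.commute_algebraMap_left _ _),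
    NormedSpace.exp_eq_one_add_of_sq_eq_zero hnil, Matrix.exp_algebraMap, ← Algebra.smul_def]

theorem Scov_eq_one_add_exp_neg_smul (a b T : ℝ) :
    Scov a b T = 1 + Real.exp (-2 * T) • (!![a - 1, 0; 0, b - 1] +
      T • !![2 * a - 2, b - a; b - a, 2 - 2 * b] +
      T ^ 2 • !![a + b - 2, 2 - a - b; 2 - a - b, a + b - 2]) := by
  have hinv : Real.exp (-(2 * T)) * Real.exp (2 * T) = 1 := by
    rw [← Real.exp_add, neg_add_cancel, Real.exp_zero]
  ext i j
  fin_cases i <;> fin_cases j <;> simp [Scov, neg_mul] <;>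
    -- only the diagonal entries carry the `exp (2 * T)` term
    first | linear_combination hinv | ring

/-- Equilibration of the critically damped reference process: the mean-propagation matrix
`exp(T·A)` tends to `0` and the covariance `S(T)` tends to the identity as `T → ∞`. -/
theorem stmt14 (a b : ℝ) :
    Tendsto (fun T : ℝ => NormedSpace.exp (T • (!![0, 1; -1, -2] : Matrix (Fin 2) (Fin 2) ℝ)))
      atTop (nhds (0 : Matrix (Fin 2) (Fin 2) ℝ)) ∧
    Tendsto (Scov a b) atTop (nhds (1 : Matrix (Fin 2) (Fin 2) ℝ)) := by
  constructor
  · refine (tendsto_exp_neg_mul_smul_sum_pow_smul_atTop_nhds_zero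
      ![1, !![1, 1; -1, -1]] one_pos).congr fun T => ?_
    simp only [exp_smul_critical_drift, Fin.sum_univ_two]
    simp
  · have h := (tendsto_exp_neg_mul_smul_sum_pow_smul_atTop_nhds_zero
      ![!![a - 1, 0; 0, b - 1], !![2 * a - 2, b - a; b - a, 2 - 2 * b],
        !![a + b - 2, 2 - a - b; 2 - a - b, a + b - 2]] two_pos).const_add 1
    rw [add_zero] at h
    refine h.congr fun T => ?_
    simp [Scov_eq_one_add_exp_neg_smul, Fin.sum_univ_three]
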